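/- Convergence of fuzzy value iteration: let S and A be nonempty finite sets, γ ∈ [0,1), r : S × A → ℝ, π(·|s) a probability vector on A for each s ∈ S, and for each (s,a) let 𝒫(s,a) be a nonempty finite set of probability vectors on S equipped with a capacity m_{s,a}, and let F be the fuzzy Bellman operator F(V)(s) = Σ_{a∈A} π(a|s)·[ r(s,a) + γ·(C)∫_{𝒫(s,a)} (p ↦ Σ_{s'∈S} p(s') V(s')) dm_{s,a} ]. Then F has a unique fixed point V* : S → ℝ with F(V*) = V*, and for every initial V⁰ : S → ℝ the iterates Vⁿ⁺¹ = F(Vⁿ) satisfy max_{s∈S} |Vⁿ(s) − V*(s)| ≤ γⁿ · max_{s∈S} |V⁰(s) − V*(s)| for all n, so Vⁿ → V* as n → ∞. -/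

import Mathlib

open Finset Filter

/-- A capacity on a finite type `Ω`: a normalized monotone set function. -/
def IsCapacity {Ω : Type*} [Fintype Ω] (m : Finset Ω → ℝ) : Prop :=
  m ∅ = 0 ∧ m Finset.univ = 1 ∧ ∀ ⦃A B : Finset Ω⦄, A ⊆ B → m A ≤ m B

/-- The initial segment `{σ 0, …, σ (k-1)}` of an enumeration `σ` of `Ω`. -/
def prefSet {Ω : Type*} [Fintype Ω] [DecidableEq Ω]
    (σ : Fin (Fintype.card Ω) ≃ Ω) (k : ℕ) : Finset Ω :=
  (Finset.univ.filter fun j : Fin (Fintype.card Ω) => (j : ℕ) < k).image σ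

/-- The Choquet sum of `f` against `m` along an enumeration `σ` of `Ω`. -/
def choquetSum {Ω : Type*} [Fintype Ω] [DecidableEq Ω]
    (m : Finset Ω → ℝ) (f : Ω → ℝ) (σ : Fin (Fintype.card Ω) ≃ Ω) : ℝ :=
  ∑ i : Fin (Fintype.card Ω),
    f (σ i) * (m (prefSet σ ((i : ℕ) + 1)) - m (prefSet σ (i : ℕ)))

/-- An enumeration of `Ω` along which `f` is weakly decreasing. -/
noncomputable def sortedEquiv {Ω : Type*} [Fintype Ω] (f : Ω → ℝ) :
    Fin (Fintype.card Ω) ≃ Ω :=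
  (Tuple.sort fun i => -f ((Fintype.equivFin Ω).symm i)).trans
    (Fintype.equivFin Ω).symm

/-- The discrete Choquet integral of `f` with respect to `m`. -/
noncomputable def choquet {Ω : Type*} [Fintype Ω] [DecidableEq Ω]
    (m : Finset Ω → ℝ) (f : Ω → ℝ) : ℝ :=
  choquetSum m f (sortedEquiv f)

/-- The dual capacity `m'(A) = 1 - m(Ω \ A)`. -/
def dualCap {Ω : Type*} [Fintype Ω] [DecidableEq Ω]
    (m : Finset Ω → ℝ) (A : Finset Ω) : ℝ :=
  1 - m Aᶜ

/-- Supermodularity: `m(A ∪ B) + m(A ∩ B) ≥ m(A) + m(B)`. -/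
def IsSupermodular {Ω : Type*} [DecidableEq Ω] (m : Finset Ω → ℝ) : Prop :=
  ∀ A B : Finset Ω, m A + m B ≤ m (A ∪ B) + m (A ∩ B)

/-- Submodularity: `m(A ∪ B) + m(A ∩ B) ≤ m(A) + m(B)`. -/
def IsSubmodular {Ω : Type*} [DecidableEq Ω] (m : Finset Ω → ℝ) : Prop :=
  ∀ A B : Finset Ω, m (A ∪ B) + m (A ∩ B) ≤ m A + m B

/-- A probability vector on a finite type `Ω`. -/
def IsProbVector {Ω : Type*} [Fintype Ω] (P : Ω → ℝ) : Prop :=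
  (∀ ω, 0 ≤ P ω) ∧ ∑ ω, P ω = 1

/-- Membership in the core of a capacity `m`. -/
def memCore {Ω : Type*} [Fintype Ω] (m : Finset Ω → ℝ) (P : Ω → ℝ) : Prop :=
  IsProbVector P ∧ ∀ A : Finset Ω, m A ≤ ∑ ω ∈ A, P ω

/-- The λ-rule set function `m_λ(A) = (∏_{ω ∈ A} (1 + λ g(ω)) - 1) / λ`. -/
noncomputable def mLam {Ω : Type*} (lam : ℝ) (g : Ω → ℝ) (A : Finset Ω) : ℝ :=
  ((∏ ω ∈ A, (1 + lam * g ω)) - 1) / lam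

/-! The Choquet integral with respect to a capacity satisfies the layer-cake formula
`(C)∫ f dm = c + ∫_c^M m {f ≥ t} dt` for any bounds `c ≤ f ≤ M`. It follows that the
integral is monotone and commutes with adding constants, hence is 1-Lipschitz for the sup
norm. Averaging against the probability vectors `p` and `π(·|s)` does not increase sup
distances either, so the fuzzy Bellman operator is a `γ`-contraction of `S → ℝ`, and Banach's
fixed point theorem gives the unique fixed point together with the geometric rate. -/

section Choquet

variable {Ω : Type*} [Fintype Ω] {m : Finset Ω → ℝ}

lemma antitone_comp_sortedEquiv (f : Ω → ℝ) : Antitone (f ∘ sortedEquiv f) :=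
  fun _ _ hij => by
    simpa [sortedEquiv] using Tuple.monotone_sort (fun i => -f ((Fintype.equivFin Ω).symm i)) hij

lemma antitone_capacity_superlevel (hm : IsCapacity m) (f : Ω → ℝ) :
    Antitone fun t => m {ω | t ≤ f ω} := fun s t hst =>
  hm.2.2 fun ω hω => by
    simp only [mem_filter, mem_univ, true_and] at hω ⊢
    exact hst.trans hω

variable [DecidableEq Ω] {σ : Fin (Fintype.card Ω) ≃ Ω}

@[simp]
lemma mem_prefSet {k : ℕ} {ω : Ω} : ω ∈ prefSet σ k ↔ (σ.symm ω : ℕ) < k := by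
  simp only [prefSet, mem_image, mem_filter, mem_univ, true_and]
  exact ⟨fun ⟨j, hj, hjω⟩ => hjω ▸ by simpa using hj,
    fun h => ⟨σ.symm ω, h, σ.apply_symm_apply ω⟩⟩

@[simp]
lemma prefSet_zero : prefSet σ 0 = ∅ := by
  ext; simp

@[simp]
lemma prefSet_card : prefSet σ (Fintype.card Ω) = univ := by
  ext; simp

lemma sum_ite_lt_sub_eq_sub {n k : ℕ} (hk : k ≤ n) (M : ℕ → ℝ) :
    ∑ i : Fin n, (if (i : ℕ) < k then M (i + 1) - M i else 0) = M k - M 0 := by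
  rw [Fin.sum_univ_eq_sum_range (fun i => if i < k then M (i + 1) - M i else 0), ← sum_filter,
    show (range n).filter (· < k) = range k by ext; simp only [mem_filter, mem_range]; omega,
    sum_range_sub]

/-- Along an enumeration sorting `f` decreasingly, every superlevel set of `f` is an initial
segment, so its capacity telescopes into the increments of `m` along the enumeration. -/
lemma capacity_superlevel_eq_sum {f : Ω → ℝ} (hm₀ : m ∅ = 0) (hσ : Antitone (f ∘ σ)) (t : ℝ) :
    m {ω | t ≤ f ω} = ∑ i, Set.indicator {x | x ≤ f (σ i)}
      (fun _ => m (prefSet σ (i + 1)) - m (prefSet σ i)) t := by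
  set k := #({i | t ≤ f (σ i)} : Finset _)
  have hk : ∀ i, t ≤ f (σ i) ↔ (i : ℕ) < k := fun i => by
    constructor
    · intro hi
      have : Iic i ⊆ ({i | t ≤ f (σ i)} : Finset _) := fun j hj =>
        mem_filter.2 ⟨mem_univ j, hi.trans (hσ (mem_Iic.1 hj))⟩
      simpa using card_le_card this
    · contrapose!
      intro hi
      have : ({i | t ≤ f (σ i)} : Finset _) ⊆ Iio i := fun j hj => mem_Iio.2 <|
        lt_of_not_ge fun hij => (hσ hij).not_gt (hi.trans_le (mem_filter.1 hj).2)
      simpa using card_le_card this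
  have hlevel : ({ω | t ≤ f ω} : Finset Ω) = prefSet σ k := by
    ext ω
    simpa using hk (σ.symm ω)
  have hkn : k ≤ Fintype.card Ω := (card_filter_le _ _).trans (card_fin _).le
  simp only [Set.indicator, Set.mem_ofPred_eq, hk]
  rw [sum_ite_lt_sub_eq_sub hkn (fun j => m (prefSet σ j)), hlevel, prefSet_zero, hm₀, sub_zero]

lemma sum_prefSet_succ_sub (m : Finset Ω → ℝ) (σ : Fin (Fintype.card Ω) ≃ Ω) :
    ∑ i : Fin (Fintype.card Ω), (m (prefSet σ (i + 1)) - m (prefSet σ i)) = m univ - m ∅ := by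
  rw [Fin.sum_univ_eq_sum_range (fun i => m (prefSet σ (i + 1)) - m (prefSet σ i)),
    sum_range_sub (fun j => m (prefSet σ j)), prefSet_card, prefSet_zero]

lemma choquetSum_eq_add_integral {f : Ω → ℝ} {c M : ℝ} (hm₀ : m ∅ = 0) (hm₁ : m univ = 1)
    (hσ : Antitone (f ∘ σ)) (hc : ∀ ω, c ≤ f ω) (hM : ∀ ω, f ω ≤ M) :
    choquetSum m f σ = c + ∫ t in c..M, m {ω | t ≤ f ω} := by
  have hintegrable : ∀ i ∈ (univ : Finset (Fin (Fintype.card Ω))), IntervalIntegrable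
      (Set.indicator {x | x ≤ f (σ i)} fun _ => m (prefSet σ (i + 1)) - m (prefSet σ i))
      MeasureTheory.volume c M := fun i _ => by
    rw [intervalIntegrable_iff]
    exact (MeasureTheory.integrableOn_const (by simp)).indicator measurableSet_Iic
  simp_rw [capacity_superlevel_eq_sum hm₀ hσ]
  rw [intervalIntegral.integral_finsetSum hintegrable]
  simp_rw [intervalIntegral.integral_indicator ⟨hc _, hM _⟩, intervalIntegral.integral_const,
    smul_eq_mul, sub_mul _ c]
  rw [sum_sub_distrib, ← mul_sum, sum_prefSet_succ_sub, hm₀, hm₁, choquetSum]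
  ring

lemma choquet_eq_add_integral {f : Ω → ℝ} {c M : ℝ} (hm₀ : m ∅ = 0) (hm₁ : m univ = 1)
    (hc : ∀ ω, c ≤ f ω) (hM : ∀ ω, f ω ≤ M) :
    choquet m f = c + ∫ t in c..M, m {ω | t ≤ f ω} :=
  choquetSum_eq_add_integral hm₀ hm₁ (antitone_comp_sortedEquiv f) hc hM

lemma choquet_add_const (hm₀ : m ∅ = 0) (hm₁ : m univ = 1) (f : Ω → ℝ) (d : ℝ) :
    choquet m (fun ω => f ω + d) = choquet m f + d := by
  obtain ⟨c, hc⟩ := (Set.finite_range f).bddBelow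
  obtain ⟨M, hM⟩ := (Set.finite_range f).bddAbove
  have hcf : ∀ ω, c ≤ f ω := fun ω => hc ⟨ω, rfl⟩
  have hfM : ∀ ω, f ω ≤ M := fun ω => hM ⟨ω, rfl⟩
  rw [choquet_eq_add_integral hm₀ hm₁ hcf hfM, choquet_eq_add_integral (c := c + d) (M := M + d)
    hm₀ hm₁ (fun ω => by linarith [hcf ω]) (fun ω => by linarith [hfM ω]),
    ← intervalIntegral.integral_comp_add_right]
  simp only [add_le_add_iff_right]
  ring

lemma choquet_mono (hm : IsCapacity m) {f g : Ω → ℝ} (hfg : f ≤ g) :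
    choquet m f ≤ choquet m g := by
  obtain ⟨c, hc⟩ := (Set.finite_range f).bddBelow
  obtain ⟨M, hM⟩ := (Set.finite_range g).bddAbove
  have hcf : ∀ ω, c ≤ f ω := fun ω => hc ⟨ω, rfl⟩
  have hgM : ∀ ω, g ω ≤ max M c := fun ω => le_max_of_le_left (hM ⟨ω, rfl⟩)
  rw [choquet_eq_add_integral hm.1 hm.2.1 hcf fun ω => (hfg ω).trans (hgM ω),
    choquet_eq_add_integral hm.1 hm.2.1 (fun ω => (hcf ω).trans (hfg ω)) hgM]
  gcongr 1
  refine intervalIntegral.integral_mono_on (le_max_right M c)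
    (antitone_capacity_superlevel hm f).intervalIntegrable
    (antitone_capacity_superlevel hm g).intervalIntegrable fun t _ => hm.2.2 fun ω hω => ?_
  simp only [mem_filter, mem_univ, true_and] at hω ⊢
  exact hω.trans (hfg ω)

lemma abs_choquet_sub_le (hm : IsCapacity m) {f g : Ω → ℝ} {d : ℝ}
    (hfg : ∀ ω, |f ω - g ω| ≤ d) : |choquet m f - choquet m g| ≤ d := by
  have hle : ∀ f g : Ω → ℝ, (∀ ω, |f ω - g ω| ≤ d) → choquet m f ≤ choquet m g + d :=
    fun f g hfg => choquet_add_const hm.1 hm.2.1 g d ▸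
      choquet_mono hm fun ω => by linarith [(abs_le.1 (hfg ω)).2]
  exact abs_sub_le_iff.2 ⟨by linarith [hle f g hfg],
    by linarith [hle g f fun ω => abs_sub_comm (f ω) (g ω) ▸ hfg ω]⟩

end Choquet

lemma IsProbVector.abs_sum_mul_sub_le {ι : Type*} [Fintype ι] {q : ι → ℝ} (hq : IsProbVector q)
    {x y : ι → ℝ} {d : ℝ} (hxy : ∀ i, |x i - y i| ≤ d) :
    |∑ i, q i * x i - ∑ i, q i * y i| ≤ d := by
  rw [← sum_sub_distrib]
  calc |∑ i, (q i * x i - q i * y i)|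
      ≤ ∑ i, |q i * x i - q i * y i| := abs_sum_le_sum_abs _ _
    _ ≤ ∑ i, q i * d := sum_le_sum fun i _ => by
        rw [← mul_sub, abs_mul, abs_of_nonneg (hq.1 i)]
        exact mul_le_mul_of_nonneg_left (hxy i) (hq.1 i)
    _ = d := by rw [← sum_mul, hq.2, one_mul]

lemma sup'_abs_sub_eq_dist {ι : Type*} [Fintype ι] [Nonempty ι] (V W : ι → ℝ) :
    univ.sup' univ_nonempty (fun i => |V i - W i|) = dist V W :=
  le_antisymm (sup'_le _ _ fun i _ => Real.dist_eq (V i) (W i) ▸ dist_le_pi_dist V W i)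
    ((dist_pi_le_iff (le_sup'_of_le _ (mem_univ (Classical.arbitrary ι)) (abs_nonneg _))).2
      fun i => (Real.dist_eq (V i) (W i)).symm ▸ le_sup' (fun i => |V i - W i|) (mem_univ i))

theorem fuzzy_value_iteration_converges_general
    {S A : Type*} [Fintype S] [Nonempty S] [Fintype A]
    (γ : ℝ) (hγ0 : 0 ≤ γ) (hγ1 : γ < 1)
    (r : S → A → ℝ)
    (pol : S → A → ℝ) (hpol : ∀ s, IsProbVector (pol s))
    (P : S → A → Type*) [∀ s a, Fintype (P s a)] [∀ s a, DecidableEq (P s a)]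
    (p : ∀ s a, P s a → S → ℝ) (hp : ∀ s a k, IsProbVector (p s a k))
    (m : ∀ s a, Finset (P s a) → ℝ) (hm : ∀ s a, IsCapacity (m s a))
    (F : (S → ℝ) → (S → ℝ))
    (hF : ∀ V s, F V s =
      ∑ a, pol s a *
        (r s a + γ * choquet (m s a) (fun k => ∑ s', p s a k s' * V s'))) :
    ∃ Vstar : S → ℝ, F Vstar = Vstar ∧ (∀ W : S → ℝ, F W = W → W = Vstar) ∧
      ∀ V0 : S → ℝ,
        (∀ n : ℕ,
          (Finset.univ.sup' Finset.univ_nonempty fun s => |F^[n] V0 s - Vstar s|) ≤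
            γ ^ n * Finset.univ.sup' Finset.univ_nonempty fun s => |V0 s - Vstar s|) ∧
        (∀ s, Filter.Tendsto (fun n : ℕ => F^[n] V0 s) Filter.atTop (nhds (Vstar s))) := by
  have hLip : LipschitzWith ⟨γ, hγ0⟩ F := LipschitzWith.of_dist_le_mul fun V W => by
    refine (dist_pi_le_iff (by positivity)).2 fun s => ?_
    rw [Real.dist_eq, hF, hF]
    refine (hpol s).abs_sum_mul_sub_le fun a => ?_
    rw [add_sub_add_left_eq_sub, ← mul_sub, abs_mul, abs_of_nonneg hγ0]
    refine mul_le_mul_of_nonneg_left (abs_choquet_sub_le (hm s a) fun k => ?_) hγ0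
    exact (hp s a k).abs_sum_mul_sub_le fun s' =>
      Real.dist_eq (V s') (W s') ▸ dist_le_pi_dist V W s'
  have hcontr : ContractingWith ⟨γ, hγ0⟩ F := ⟨hγ1, hLip⟩
  set Vstar := hcontr.fixedPoint F
  refine ⟨Vstar, hcontr.fixedPoint_isFixedPt, fun W hW => hcontr.fixedPoint_unique hW,
    fun V0 => ⟨fun n => ?_, fun s => tendsto_pi_nhds.1 (hcontr.tendsto_iterate_fixedPoint V0) s⟩⟩
  simp only [sup'_abs_sub_eq_dist]
  calc dist (F^[n] V0) Vstar = dist (F^[n] V0) (F^[n] Vstar) := by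
        rw [(hcontr.fixedPoint_isFixedPt.iterate n).eq]
    _ ≤ γ ^ n * dist V0 Vstar := (hLip.iterate n).dist_le_mul V0 Vstar

/-- the fuzzy Bellman operator has a unique fixed point and value
iteration converges to it geometrically. -/
theorem fuzzy_value_iteration_converges
    {S A : Type*} [Fintype S] [Nonempty S] [Fintype A] [Nonempty A]
    (γ : ℝ) (hγ0 : 0 ≤ γ) (hγ1 : γ < 1)
    (r : S → A → ℝ)
    (pol : S → A → ℝ) (hpol : ∀ s, IsProbVector (pol s))
    (P : S → A → Type*) [∀ s a, Fintype (P s a)] [∀ s a, DecidableEq (P s a)]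
    [∀ s a, Nonempty (P s a)]
    (p : ∀ s a, P s a → S → ℝ) (hp : ∀ s a k, IsProbVector (p s a k))
    (m : ∀ s a, Finset (P s a) → ℝ) (hm : ∀ s a, IsCapacity (m s a))
    (F : (S → ℝ) → (S → ℝ))
    (hF : ∀ V s, F V s =
      ∑ a, pol s a *
        (r s a + γ * choquet (m s a) (fun k => ∑ s', p s a k s' * V s'))) :
    ∃ Vstar : S → ℝ, F Vstar = Vstar ∧ (∀ W : S → ℝ, F W = W → W = Vstar) ∧
      ∀ V0 : S → ℝ,
        (∀ n : ℕ,
          (Finset.univ.sup' Finset.univ_nonempty fun s => |F^[n] V0 s - Vstar s|) ≤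
            γ ^ n * Finset.univ.sup' Finset.univ_nonempty fun s => |V0 s - Vstar s|) ∧
        (∀ s, Filter.Tendsto (fun n : ℕ => F^[n] V0 s) Filter.atTop (nhds (Vstar s))) :=
  fuzzy_value_iteration_converges_general γ hγ0 hγ1 r pol hpol P p hp m hm F hF
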